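/- Let φ be the Gaussian free field on a finite set Λ with covariance C = (−Δ+m²)^{−1}, m > 0. For X ⊂ Y ⊂ Λ and κ > 0 small enough that the relevant Gaussian integrals converge, define N(X,Y) := E[exp((κ/2)Σ_{x∈X,e}(∂_e φ(x))²) | φ = 0 on Y^c] and G(X,Y) := E[exp((κ/2)Σ_{x∈X,e}(∂_e φ(x))²) | φ on Y^c] / N(X,Y). Then: (i) G(X,Y) = 1 when the conditioning field vanishes (φ|_{∂Y} = 0 gives G = 1); (ii) if X₁ ⊂ Y₁, X₂ ⊂ Y₂, and Y₁ ∪ ∂Y₁ is disjoint from Y₂ ∪ ∂Y₂, then G(X₁,Y₁)·G(X₂,Y₂) = G(X₁∪X₂, Y₁∪Y₂); (iii) for fixed Y, X ↦ G(X,Y) is monotonically increasing (pointwise in the conditioning field) in X ⊂ Y. -/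

import Mathlib

/-!
Write `Z(X, Y, φ) = ∫ exp W_X(ψ ⊔ φ) dψ` (`partitionFunction`), integrating the field on `Y` with
`φ` fixed outside, where `W_X = (κ/4) Σ_X (∂χ)² - energy` (`logWeight`) is a quadratic form in the
field; then
`G(X,Y)(φ) = Z(X,Y,φ) Z(∅,Y,0) / (Z(∅,Y,φ) Z(X,Y,0))` and (i) is immediate.

(ii) If `Y₁ ∪ ∂Y₁` and `Y₂ ∪ ∂Y₂` are disjoint, no edge touches both `Y₁` and `Y₂`, so for the glued
field `χ₁ + χ₂ - φ` the exponent splits as `W_{X₁}(χ₁) + W_{X₂}(χ₂) + energy(φ)`. By Fubini,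
`Z(X₁ ∪ X₂, Y₁ ∪ Y₂, φ) = exp(energy φ) Z(X₁,Y₁,φ) Z(X₂,Y₂,φ)`, and the factors `exp(energy φ)`
cancel in `G`.

(iii) Integrability of `exp W_X` over the variables on `Y` forces `W_X` to be negative definite
there: along a direction where it is nonnegative the one-dimensional slices are not integrable.
Completing the square then gives `Z(X,Y,φ) = exp(sup_ψ W_X(ψ ⊔ φ)) Z(X,Y,0)`, so
`G(X,Y)(φ) = exp(sup W_X - sup W_∅)`, which is monotone in `X` because `W_X` is.
-/

open Finset MeasureTheory

abbrev Pt (d : ℕ) := Fin d → ℤ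

def unitVec {d : ℕ} (i : Fin d) : Pt d := fun j => if j = i then 1 else 0

def dirs (d : ℕ) : Finset (Pt d) :=
  (Finset.univ : Finset (Fin d)).biUnion fun i => {unitVec i, -unitVec i}

abbrev Fld (d : ℕ) := Pt d → ℝ

/-- Replace the values of `φ` on `Y` by `ψ`. -/
def paste {d : ℕ} (Y : Finset (Pt d)) (φ : Fld d) (ψ : ↥Y → ℝ) : Fld d :=
  fun x => if h : x ∈ Y then ψ ⟨x, h⟩ else φ x

/-- `Σ_e (∂_e χ(x))²`, summed over all `2d` directions (twice each edge at `x`). -/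
def gradSq {d : ℕ} (χ : Fld d) (x : Pt d) : ℝ :=
  ∑ v ∈ dirs d, (χ (x + v) - χ x) ^ 2

/-- The Gaussian energy `½ Σ_Λ (∂φ)² + (m²/2) Σ_Λ φ²` (with the convention
`Σ(∂φ)² = ½ Σ_x Σ_e (∂_e φ(x))²`). -/
noncomputable def energy {d : ℕ} (Λf : Finset (Pt d)) (m : ℝ) (χ : Fld d) : ℝ :=
  (1 / 4) * ∑ x ∈ Λf, gradSq χ x + m ^ 2 / 2 * ∑ x ∈ Λf, (χ x) ^ 2

/-- The Gaussian conditional expectation `E[F | φ on Y^c]`: integrate the variables on `Y`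
against the Gaussian weight with the field fixed outside `Y`. -/
noncomputable def condExp {d : ℕ} (Λf Y : Finset (Pt d)) (m : ℝ)
    (F : Fld d → ℝ) (φ : Fld d) : ℝ :=
  (∫ ψ : ↥Y → ℝ, F (paste Y φ ψ) * Real.exp (-energy Λf m (paste Y φ ψ))) /
    (∫ ψ : ↥Y → ℝ, Real.exp (-energy Λf m (paste Y φ ψ)))

/-- The regulator `G(X,Y) = E[exp((κ/2)Σ_X(∂φ)²) | Y^c] / N(X,Y)`, where `N(X,Y)` is the
same conditional expectation with zero boundary field. -/
noncomputable def reg {d : ℕ} (Λf : Finset (Pt d)) (m κ : ℝ)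
    (X Y : Finset (Pt d)) (φ : Fld d) : ℝ :=
  condExp Λf Y m (fun χ => Real.exp (κ / 4 * ∑ x ∈ X, gradSq χ x)) φ /
    condExp Λf Y m (fun χ => Real.exp (κ / 4 * ∑ x ∈ X, gradSq χ x)) 0

/-- `Y` together with its outer boundary `Y ∪ ∂Y`. -/
def closStar {d : ℕ} (Y : Finset (Pt d)) : Set (Pt d) :=
  {x | x ∈ Y ∨ ∃ v ∈ dirs d, x + v ∈ Y}

lemma not_integrable_exp_quadratic {q b a : ℝ} (hq : 0 ≤ q) :
    ¬ Integrable (fun t : ℝ => Real.exp (q * t ^ 2 + b * t + a)) := by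
  wlog hb : 0 ≤ b generalizing b
  · intro h
    refine this (b := -b) (by linarith) ?_
    simpa using h.comp_neg
  intro h
  have hconst : IntegrableOn (fun _ : ℝ => Real.exp a) (Set.Ici 0) := by
    refine h.integrableOn.mono' aestronglyMeasurable_const ?_
    refine (ae_restrict_iff' measurableSet_Ici).2 (.of_forall fun t (ht : 0 ≤ t) => ?_)
    rw [Real.norm_of_nonneg (Real.exp_pos a).le, Real.exp_le_exp]
    nlinarith
  simp [integrableOn_const_iff, (Real.exp_pos a).ne'] at hconst

namespace QuadraticMap

theorem exists_forall_add_eq_sub_sub {E : Type*} [AddCommGroup E] [Module ℝ E]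
    [FiniteDimensional ℝ E] (Q : QuadraticForm ℝ E) (hQ : Q.Anisotropic)
    (ℓ : Module.Dual ℝ E) : ∃ x₀, ∀ x, Q x + ℓ x = Q (x - x₀) - Q x₀ := by
  have hinj : Function.Injective (polarBilin Q) := by
    refine (injective_iff_map_eq_zero _).2 fun x hx => hQ x ?_
    have := LinearMap.congr_fun hx x
    simp only [polarBilin_apply_apply, polar_self, LinearMap.zero_apply] at this
    simpa using this
  obtain ⟨x₀, hx₀⟩ := (LinearMap.injective_iff_surjective_of_finrank_eq_finrank
    Subspace.dual_finrank_eq.symm).1 hinj (-ℓ)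
  refine ⟨x₀, fun x => ?_⟩
  have h := LinearMap.congr_fun hx₀ x
  simp only [polarBilin_apply_apply, LinearMap.neg_apply] at h
  have := QuadraticMap.map_add Q x (-x₀)
  rw [Q.map_neg, polar_neg_right, polar_comm, h, ← sub_eq_add_neg] at this
  linarith

lemma not_integrable_exp_prod_of_nonneg {F : Type*} [AddCommGroup F] [Module ℝ F]
    [MeasurableSpace F] (Q : QuadraticForm ℝ (ℝ × F)) (hQ : 0 ≤ Q (1, 0))
    (ν : Measure F) [SFinite ν] [NeZero ν] :
    ¬ Integrable (fun p => Real.exp (Q p)) ((volume : Measure ℝ).prod ν) := by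
  intro h
  obtain ⟨w, hw⟩ := h.prod_left_ae.exists
  refine not_integrable_exp_quadratic hQ (b := polar Q (1, 0) (0, w)) (a := Q (0, w)) ?_
  convert hw using 3 with t
  have : ((t, w) : ℝ × F) = t • (1, 0) + (0, w) := by simp
  rw [this, QuadraticMap.map_add (⇑Q), Q.map_smul, polar_smul_left, smul_eq_mul, smul_eq_mul]
  ring

variable {E : Type*} [NormedAddCommGroup E] [NormedSpace ℝ E] [FiniteDimensional ℝ E]
  [MeasurableSpace E] [BorelSpace E]

theorem posDef_neg_of_integrable_exp (Q : QuadraticForm ℝ E) {μ : Measure E}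
    [μ.IsAddHaarMeasure] (h : Integrable (fun x => Real.exp (Q x)) μ) : (-Q).PosDef := by
  intro v hv
  by_contra! hQv
  replace hQv : 0 ≤ Q v := by simpa using hQv
  have : Nontrivial E := ⟨v, 0, hv⟩
  obtain ⟨n, hn⟩ : ∃ n, Module.finrank ℝ E = n + 1 :=
    Nat.exists_eq_add_one.2 Module.finrank_pos
  obtain ⟨L, hL⟩ : ∃ L : (ℝ × (Fin n → ℝ)) ≃L[ℝ] E, L (1, 0) = v := by
    let L₀ := ContinuousLinearEquiv.ofFinrankEq (𝕜 := ℝ) (E := ℝ × (Fin n → ℝ)) (F := E)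
      (by simp [hn, add_comm])
    obtain ⟨M, hM⟩ := SeparatingDual.exists_continuousLinearEquiv_apply_eq (R := ℝ)
      (L₀.map_ne_zero_iff.2 (by simp : ((1, 0) : ℝ × (Fin n → ℝ)) ≠ 0)) hv
    exact ⟨L₀.trans M, hM⟩
  apply (Q.comp (L : (ℝ × (Fin n → ℝ)) →ₗ[ℝ] E)).not_integrable_exp_prod_of_nonneg
    (by simpa [hL]) volume
  have hmap : Integrable (fun p => Real.exp (Q (L p))) (μ.map L.symm) := by
    refine (L.symm.toHomeomorph.measurableEmbedding.integrable_map_iff (μ := μ)).2 ?_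
    simpa [Function.comp_def] using h
  -- `μ.map L.symm` is an additive Haar measure, hence a multiple of the product measure
  rw [Measure.isAddLeftInvariant_eq_smul
    ((volume : Measure ℝ).prod (volume : Measure (Fin n → ℝ))) (μ.map L.symm)]
  exact hmap.smul_measure_nnreal

theorem exists_integral_exp_comp_add {F : Type*} [AddCommGroup F] [Module ℝ F]
    (q : QuadraticForm ℝ F) (A : E →ₗ[ℝ] F) (b : F) {μ : Measure E} [μ.IsAddHaarMeasure]
    (h : Integrable (fun x => Real.exp (q (A x))) μ) :
    ∃ x₀, (∀ x, q (A x + b) ≤ q (A x₀ + b)) ∧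
      ∫ x, Real.exp (q (A x + b)) ∂μ = Real.exp (q (A x₀ + b)) * ∫ x, Real.exp (q (A x)) ∂μ := by
  have hneg : (-q.comp A).PosDef := (q.comp A).posDef_neg_of_integrable_exp h
  obtain ⟨x₀, hx₀⟩ := (q.comp A).exists_forall_add_eq_sub_sub
    (fun x hx => hneg.anisotropic x (by simp [hx])) ((polarBilin q).flip b ∘ₗ A)
  have hsplit : ∀ x, q (A x + b) = q (A (x - x₀)) + q (A x₀ + b) := by
    intro x
    have hx := hx₀ x
    have h0 := hx₀ x₀
    simp only [comp_apply, LinearMap.comp_apply, LinearMap.flip_apply, polarBilin_apply_apply,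
      sub_self, map_zero] at hx h0
    rw [QuadraticMap.map_add (⇑q), QuadraticMap.map_add (⇑q) (A x₀)]
    linarith
  refine ⟨x₀, fun x => ?_, ?_⟩
  · have := hneg.nonneg (x - x₀)
    simp only [neg_apply, comp_apply, Left.nonneg_neg_iff] at this
    linarith [hsplit x]
  · have hexp : (fun x => Real.exp (q (A x + b))) =
        fun x => Real.exp (q (A (x - x₀))) * Real.exp (q (A x₀ + b)) := by
      funext x
      rw [hsplit, Real.exp_add]
    rw [hexp, integral_mul_const, integral_sub_right_eq_self (fun x => Real.exp (q (A x))),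
      mul_comm]

end QuadraticMap

section Lattice

variable {d : ℕ}

lemma neg_mem_dirs {v : Pt d} (hv : v ∈ dirs d) : -v ∈ dirs d := by
  simp only [dirs, mem_biUnion, mem_insert, mem_singleton] at hv ⊢
  obtain ⟨i, hi, h⟩ := hv
  exact ⟨i, hi, by rcases h with rfl | rfl <;> simp⟩

lemma mem_closStar_of_mem {Y : Finset (Pt d)} {x : Pt d} (h : x ∈ Y) : x ∈ closStar Y :=
  Or.inl h

lemma mem_closStar_of_edge {Y : Finset (Pt d)} {x v : Pt d} (hv : v ∈ dirs d)
    (h : x ∈ Y ∨ x + v ∈ Y) : x ∈ closStar Y ∧ x + v ∈ closStar Y := by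
  rcases h with h | h
  · exact ⟨Or.inl h, Or.inr ⟨-v, neg_mem_dirs hv, by simpa using h⟩⟩
  · exact ⟨Or.inr ⟨v, hv, h⟩, Or.inl h⟩

lemma paste_of_notMem {Y : Finset (Pt d)} (φ : Fld d) (ψ : ↥Y → ℝ) {x : Pt d} (h : x ∉ Y) :
    paste Y φ ψ x = φ x :=
  dif_neg h

lemma gradSq_congr {χ χ' : Fld d} {x : Pt d} (h : χ x = χ' x)
    (hv : ∀ v ∈ dirs d, χ (x + v) = χ' (x + v)) : gradSq χ x = gradSq χ' x :=
  sum_congr rfl fun v hv' => by rw [h, hv v hv']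

def gradSqForm (x : Pt d) : QuadraticForm ℝ (Fld d) :=
  ∑ v ∈ dirs d, QuadraticMap.sq.comp
    (LinearMap.proj (R := ℝ) (φ := fun _ : Pt d => ℝ) (x + v) - LinearMap.proj x)

@[simp]
lemma gradSqForm_apply (x : Pt d) (χ : Fld d) : gradSqForm x χ = gradSq χ x := by
  simp [gradSqForm, gradSq, sq]

noncomputable def logWeight (Λf : Finset (Pt d)) (m κ : ℝ) (X : Finset (Pt d)) :
    QuadraticForm ℝ (Fld d) :=
  (κ / 4) • ∑ x ∈ X, gradSqForm x - ((1 / 4 : ℝ) • ∑ x ∈ Λf, gradSqForm x + (m ^ 2 / 2) •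
    ∑ x ∈ Λf, QuadraticMap.sq.comp (LinearMap.proj (R := ℝ) (φ := fun _ : Pt d => ℝ) x))

lemma logWeight_apply (Λf : Finset (Pt d)) (m κ : ℝ) (X : Finset (Pt d)) (χ : Fld d) :
    logWeight Λf m κ X χ = κ / 4 * ∑ x ∈ X, gradSq χ x - energy Λf m χ := by
  simp [logWeight, energy, sq]

lemma exp_logWeight (Λf : Finset (Pt d)) (m κ : ℝ) (X : Finset (Pt d)) (χ : Fld d) :
    Real.exp (logWeight Λf m κ X χ) =
      Real.exp (κ / 4 * ∑ x ∈ X, gradSq χ x) * Real.exp (-energy Λf m χ) := by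
  rw [logWeight_apply, sub_eq_add_neg, Real.exp_add]

lemma logWeight_mono (Λf : Finset (Pt d)) (m : ℝ) {κ : ℝ} (hκ : 0 ≤ κ) {X X' : Finset (Pt d)}
    (hX : X ⊆ X') (χ : Fld d) : logWeight Λf m κ X χ ≤ logWeight Λf m κ X' χ := by
  have : ∑ x ∈ X, gradSq χ x ≤ ∑ x ∈ X', gradSq χ x :=
    sum_le_sum_of_subset_of_nonneg hX fun x _ _ => sum_nonneg fun v _ => sq_nonneg _
  simp only [logWeight_apply]
  gcongr

noncomputable def partitionFunction (Λf : Finset (Pt d)) (m κ : ℝ) (X Y : Finset (Pt d))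
    (φ : Fld d) : ℝ :=
  ∫ ψ : ↥Y → ℝ, Real.exp (logWeight Λf m κ X (paste Y φ ψ))

lemma condExp_eq_div (Λf X Y : Finset (Pt d)) (m κ : ℝ) (φ : Fld d) :
    condExp Λf Y m (fun χ => Real.exp (κ / 4 * ∑ x ∈ X, gradSq χ x)) φ =
      partitionFunction Λf m κ X Y φ / partitionFunction Λf m κ ∅ Y φ := by
  simp only [_root_.condExp, partitionFunction, exp_logWeight, sum_empty, mul_zero, Real.exp_zero,
    one_mul]

lemma reg_eq_div (Λf : Finset (Pt d)) (m κ : ℝ) (X Y : Finset (Pt d)) (φ : Fld d) :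
    reg Λf m κ X Y φ = partitionFunction Λf m κ X Y φ / partitionFunction Λf m κ ∅ Y φ /
      (partitionFunction Λf m κ X Y 0 / partitionFunction Λf m κ ∅ Y 0) := by
  simp only [reg, condExp_eq_div]

section Separated

variable {Y₁ Y₂ : Finset (Pt d)} {φ χ₁ χ₂ : Fld d}

lemma notMem_of_mem_closStar (hY : Disjoint (closStar Y₁) (closStar Y₂)) {z : Pt d}
    (hz : z ∈ closStar Y₂) : z ∉ Y₁ :=
  fun h => Set.disjoint_left.1 hY (mem_closStar_of_mem h) hz

lemma add_sub_apply_of_notMem (hχ₂ : ∀ z ∉ Y₂, χ₂ z = φ z) {z : Pt d} (hz : z ∉ Y₂) :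
    (χ₁ + χ₂ - φ) z = χ₁ z := by
  simp [hχ₂ z hz]

lemma sq_add_sub_add_sq {a b c : ℝ} (h : a = c ∨ b = c) :
    (a + b - c) ^ 2 + c ^ 2 = a ^ 2 + b ^ 2 := by
  rcases h with rfl | rfl <;> ring

lemma gradSq_add_sub_add (hY : Disjoint (closStar Y₁) (closStar Y₂))
    (hχ₁ : ∀ z ∉ Y₁, χ₁ z = φ z) (hχ₂ : ∀ z ∉ Y₂, χ₂ z = φ z) (x : Pt d) :
    gradSq (χ₁ + χ₂ - φ) x + gradSq φ x = gradSq χ₁ x + gradSq χ₂ x := by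
  simp only [gradSq, ← sum_add_distrib]
  refine sum_congr rfl fun v hv => ?_
  have hedge : χ₁ (x + v) - χ₁ x = φ (x + v) - φ x ∨ χ₂ (x + v) - χ₂ x = φ (x + v) - φ x := by
    by_cases h : x ∈ Y₂ ∨ x + v ∈ Y₂
    · obtain ⟨h₀, h₁⟩ := mem_closStar_of_edge hv h
      rw [hχ₁ x (notMem_of_mem_closStar hY h₀), hχ₁ _ (notMem_of_mem_closStar hY h₁)]
      exact Or.inl rfl
    · push Not at h
      rw [hχ₂ x h.1, hχ₂ _ h.2]
      exact Or.inr rfl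
  simp only [Pi.add_apply, Pi.sub_apply]
  linear_combination sq_add_sub_add_sq hedge

lemma energy_add_sub_add (Λf : Finset (Pt d)) (m : ℝ) (hY : Disjoint (closStar Y₁) (closStar Y₂))
    (hχ₁ : ∀ z ∉ Y₁, χ₁ z = φ z) (hχ₂ : ∀ z ∉ Y₂, χ₂ z = φ z) :
    energy Λf m (χ₁ + χ₂ - φ) + energy Λf m φ = energy Λf m χ₁ + energy Λf m χ₂ := by
  have hgrad : ∑ x ∈ Λf, gradSq (χ₁ + χ₂ - φ) x + ∑ x ∈ Λf, gradSq φ x =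
      ∑ x ∈ Λf, gradSq χ₁ x + ∑ x ∈ Λf, gradSq χ₂ x := by
    simp only [← sum_add_distrib, gradSq_add_sub_add hY hχ₁ hχ₂]
  have hsq : ∑ x ∈ Λf, (χ₁ + χ₂ - φ) x ^ 2 + ∑ x ∈ Λf, φ x ^ 2 =
      ∑ x ∈ Λf, χ₁ x ^ 2 + ∑ x ∈ Λf, χ₂ x ^ 2 := by
    simp only [← sum_add_distrib, Pi.add_apply, Pi.sub_apply]
    refine sum_congr rfl fun z _ => sq_add_sub_add_sq ?_
    by_cases h : z ∈ Y₂
    · exact Or.inl (hχ₁ z (notMem_of_mem_closStar hY (mem_closStar_of_mem h)))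
    · exact Or.inr (hχ₂ z h)
  unfold energy
  linear_combination (1 / 4 : ℝ) * hgrad + m ^ 2 / 2 * hsq

lemma gradSq_add_sub_of_mem (hY : Disjoint (closStar Y₁) (closStar Y₂))
    (hχ₂ : ∀ z ∉ Y₂, χ₂ z = φ z) {x : Pt d} (hx : x ∈ Y₁) :
    gradSq (χ₁ + χ₂ - φ) x = gradSq χ₁ x :=
  gradSq_congr (add_sub_apply_of_notMem hχ₂ (notMem_of_mem_closStar hY.symm (Or.inl hx)))
    fun _ hv => add_sub_apply_of_notMem hχ₂
      (notMem_of_mem_closStar hY.symm (mem_closStar_of_edge hv (Or.inl hx)).2)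

lemma logWeight_add_sub_add (Λf : Finset (Pt d)) (m κ : ℝ) {X₁ X₂ : Finset (Pt d)}
    (hX₁ : X₁ ⊆ Y₁) (hX₂ : X₂ ⊆ Y₂) (hY : Disjoint (closStar Y₁) (closStar Y₂))
    (hχ₁ : ∀ z ∉ Y₁, χ₁ z = φ z) (hχ₂ : ∀ z ∉ Y₂, χ₂ z = φ z) :
    logWeight Λf m κ (X₁ ∪ X₂) (χ₁ + χ₂ - φ) =
      logWeight Λf m κ X₁ χ₁ + logWeight Λf m κ X₂ χ₂ + energy Λf m φ := by
  have hX : Disjoint X₁ X₂ := disjoint_left.2 fun x h₁ h₂ =>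
    notMem_of_mem_closStar hY (mem_closStar_of_mem (hX₂ h₂)) (hX₁ h₁)
  have hgrad : ∑ x ∈ X₁ ∪ X₂, gradSq (χ₁ + χ₂ - φ) x =
      ∑ x ∈ X₁, gradSq χ₁ x + ∑ x ∈ X₂, gradSq χ₂ x := by
    rw [sum_union hX]
    congr 1
    · exact sum_congr rfl fun x hx => gradSq_add_sub_of_mem hY hχ₂ (hX₁ hx)
    · refine sum_congr rfl fun x hx => ?_
      rw [add_comm χ₁]
      exact gradSq_add_sub_of_mem hY.symm hχ₁ (hX₂ hx)
  simp only [logWeight_apply]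
  linear_combination κ / 4 * hgrad - energy_add_sub_add Λf m hY hχ₁ hχ₂

end Separated

lemma paste_piFinsetUnion {Y₁ Y₂ : Finset (Pt d)} (hY : Disjoint Y₁ Y₂) (φ : Fld d)
    (ψ₁ : ↥Y₁ → ℝ) (ψ₂ : ↥Y₂ → ℝ) :
    paste (Y₁ ∪ Y₂) φ (MeasurableEquiv.piFinsetUnion (fun _ => ℝ) hY (ψ₁, ψ₂)) =
      paste Y₁ φ ψ₁ + paste Y₂ φ ψ₂ - φ := by
  funext z
  by_cases h₁ : z ∈ Y₁
  · have h₂ : z ∉ Y₂ := disjoint_left.1 hY h₁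
    simp only [paste, mem_union, h₁, h₂, or_false, dif_pos, Pi.add_apply, Pi.sub_apply,
      dif_neg, not_false_eq_true, add_sub_cancel_right]
    exact Equiv.piFinsetUnion_left (fun _ => ℝ) hY (f := ψ₁) (g := ψ₂) h₁ _
  · by_cases h₂ : z ∈ Y₂
    · simp only [paste, mem_union, h₁, h₂, or_true, dif_pos, Pi.add_apply, Pi.sub_apply,
        dif_neg, not_false_eq_true, add_sub_cancel_left]
      exact Equiv.piFinsetUnion_right (fun _ => ℝ) hY (f := ψ₁) (g := ψ₂) h₂ _
    · simp [paste, h₁, h₂]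

theorem partitionFunction_union (Λf : Finset (Pt d)) (m κ : ℝ) {X₁ X₂ Y₁ Y₂ : Finset (Pt d)}
    (hX₁ : X₁ ⊆ Y₁) (hX₂ : X₂ ⊆ Y₂) (hY : Disjoint (closStar Y₁) (closStar Y₂)) (φ : Fld d) :
    partitionFunction Λf m κ (X₁ ∪ X₂) (Y₁ ∪ Y₂) φ = Real.exp (energy Λf m φ) *
      (partitionFunction Λf m κ X₁ Y₁ φ * partitionFunction Λf m κ X₂ Y₂ φ) := by
  have hY' : Disjoint Y₁ Y₂ := disjoint_left.2 fun z h₁ =>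
    notMem_of_mem_closStar hY.symm (mem_closStar_of_mem h₁)
  have hsplit : ∀ p : (↥Y₁ → ℝ) × (↥Y₂ → ℝ),
      Real.exp (logWeight Λf m κ (X₁ ∪ X₂)
        (paste (Y₁ ∪ Y₂) φ (MeasurableEquiv.piFinsetUnion (fun _ => ℝ) hY' p))) =
      Real.exp (energy Λf m φ) * (Real.exp (logWeight Λf m κ X₁ (paste Y₁ φ p.1)) *
        Real.exp (logWeight Λf m κ X₂ (paste Y₂ φ p.2))) := by
    rintro ⟨ψ₁, ψ₂⟩
    rw [paste_piFinsetUnion, logWeight_add_sub_add Λf m κ hX₁ hX₂ hY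
      (fun _ => paste_of_notMem φ ψ₁) (fun _ => paste_of_notMem φ ψ₂), Real.exp_add,
      Real.exp_add]
    ring
  rw [partitionFunction, ← (volume_preserving_piFinsetUnion (fun _ => ℝ) hY').integral_comp',
    integral_congr_ae (.of_forall hsplit), integral_const_mul]
  exact congrArg _ (integral_prod_mul (μ := volume) (ν := volume)
    (fun ψ₁ => Real.exp (logWeight Λf m κ X₁ (paste Y₁ φ ψ₁)))
    (fun ψ₂ => Real.exp (logWeight Λf m κ X₂ (paste Y₂ φ ψ₂))))

theorem reg_mul_reg (Λf : Finset (Pt d)) (m κ : ℝ) {X₁ X₂ Y₁ Y₂ : Finset (Pt d)}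
    (hX₁ : X₁ ⊆ Y₁) (hX₂ : X₂ ⊆ Y₂) (hY : Disjoint (closStar Y₁) (closStar Y₂)) (φ : Fld d) :
    reg Λf m κ X₁ Y₁ φ * reg Λf m κ X₂ Y₂ φ = reg Λf m κ (X₁ ∪ X₂) (Y₁ ∪ Y₂) φ := by
  have hempty := partitionFunction_union Λf m κ (empty_subset Y₁) (empty_subset Y₂) hY
  rw [empty_union] at hempty
  simp only [reg_eq_div, partitionFunction_union Λf m κ hX₁ hX₂ hY, hempty,
    mul_div_mul_left _ _ (Real.exp_pos _).ne']
  ring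

def extendByZero (Y : Finset (Pt d)) : (↥Y → ℝ) →ₗ[ℝ] Fld d where
  toFun := paste Y 0
  map_add' ψ ψ' := by funext x; by_cases h : x ∈ Y <;> simp [paste, h]
  map_smul' t ψ := by funext x; by_cases h : x ∈ Y <;> simp [paste, h]

lemma paste_eq_extendByZero_add (Y : Finset (Pt d)) (φ : Fld d) (ψ : ↥Y → ℝ) :
    paste Y φ ψ = extendByZero Y ψ + paste Y φ 0 := by
  funext x; by_cases h : x ∈ Y <;> simp [extendByZero, paste, h]

theorem exists_partitionFunction_eq_exp_mul (Λf : Finset (Pt d)) (m κ : ℝ) (X Y : Finset (Pt d))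
    (h : Integrable fun ψ : ↥Y → ℝ => Real.exp (logWeight Λf m κ X (paste Y 0 ψ))) (φ : Fld d) :
    ∃ ψ₀ : ↥Y → ℝ, (∀ ψ, logWeight Λf m κ X (paste Y φ ψ) ≤ logWeight Λf m κ X (paste Y φ ψ₀)) ∧
      partitionFunction Λf m κ X Y φ =
        Real.exp (logWeight Λf m κ X (paste Y φ ψ₀)) * partitionFunction Λf m κ X Y 0 := by
  have := (logWeight Λf m κ X).exists_integral_exp_comp_add (extendByZero Y) (paste Y φ 0) h
  simp only [← paste_eq_extendByZero_add] at this
  exact this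

theorem reg_eq_exp_sub (Λf : Finset (Pt d)) (m κ : ℝ) (X Y : Finset (Pt d))
    (hX : Integrable fun ψ : ↥Y → ℝ => Real.exp (logWeight Λf m κ X (paste Y 0 ψ)))
    (h₀ : Integrable fun ψ : ↥Y → ℝ => Real.exp (logWeight Λf m κ ∅ (paste Y 0 ψ))) (φ : Fld d) :
    reg Λf m κ X Y φ = Real.exp ((⨆ ψ, logWeight Λf m κ X (paste Y φ ψ)) -
      ⨆ ψ, logWeight Λf m κ ∅ (paste Y φ ψ)) := by
  obtain ⟨ψX, hψX, hZX⟩ := exists_partitionFunction_eq_exp_mul Λf m κ X Y hX φ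
  obtain ⟨ψ₀, hψ₀, hZ₀⟩ := exists_partitionFunction_eq_exp_mul Λf m κ ∅ Y h₀ φ
  have hsupX := le_antisymm (ciSup_le hψX) (le_ciSup ⟨_, Set.forall_mem_range.2 hψX⟩ ψX)
  have hsup₀ := le_antisymm (ciSup_le hψ₀) (le_ciSup ⟨_, Set.forall_mem_range.2 hψ₀⟩ ψ₀)
  have hposX : 0 < partitionFunction Λf m κ X Y 0 := integral_exp_pos hX
  have hpos₀ : 0 < partitionFunction Λf m κ ∅ Y 0 := integral_exp_pos h₀
  rw [reg_eq_div, hZX, hZ₀, hsupX, hsup₀, Real.exp_sub]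
  field_simp

theorem reg_le_reg_of_subset (Λf : Finset (Pt d)) (m : ℝ) {κ : ℝ} (hκ : 0 ≤ κ)
    {X X' Y : Finset (Pt d)} (hXX' : X ⊆ X')
    (hX : Integrable fun ψ : ↥Y → ℝ => Real.exp (logWeight Λf m κ X (paste Y 0 ψ)))
    (hX' : Integrable fun ψ : ↥Y → ℝ => Real.exp (logWeight Λf m κ X' (paste Y 0 ψ)))
    (h₀ : Integrable fun ψ : ↥Y → ℝ => Real.exp (logWeight Λf m κ ∅ (paste Y 0 ψ))) (φ : Fld d) :
    reg Λf m κ X Y φ ≤ reg Λf m κ X' Y φ := by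
  obtain ⟨ψ', hψ', -⟩ := exists_partitionFunction_eq_exp_mul Λf m κ X' Y hX' φ
  rw [reg_eq_exp_sub Λf m κ X Y hX h₀, reg_eq_exp_sub Λf m κ X' Y hX' h₀]
  gcongr with ψ
  · exact ⟨_, Set.forall_mem_range.2 hψ'⟩
  · exact logWeight_mono Λf m hκ hXX' _

end Lattice

theorem stmt14 {d : ℕ} (Λf : Finset (Pt d)) (m κ : ℝ) (hκ : 0 < κ)
    (hint : ∀ (X Y : Finset (Pt d)) (φ : Fld d), X ⊆ Y → Y ⊆ Λf →
      Integrable (fun ψ : ↥Y → ℝ =>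
        Real.exp (κ / 4 * ∑ x ∈ X, gradSq (paste Y φ ψ) x) *
          Real.exp (-energy Λf m (paste Y φ ψ)))) :
    (∀ X Y : Finset (Pt d), X ⊆ Y → Y ⊆ Λf → reg Λf m κ X Y 0 = 1) ∧
    (∀ X₁ Y₁ X₂ Y₂ : Finset (Pt d), X₁ ⊆ Y₁ → X₂ ⊆ Y₂ → Y₁ ⊆ Λf → Y₂ ⊆ Λf →
      Disjoint (closStar Y₁) (closStar Y₂) →
      ∀ φ : Fld d,
        reg Λf m κ X₁ Y₁ φ * reg Λf m κ X₂ Y₂ φ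
          = reg Λf m κ (X₁ ∪ X₂) (Y₁ ∪ Y₂) φ) ∧
    (∀ X X' Y : Finset (Pt d), X ⊆ X' → X' ⊆ Y → Y ⊆ Λf →
      ∀ φ : Fld d, reg Λf m κ X Y φ ≤ reg Λf m κ X' Y φ) := by
  have hZ : ∀ X Y : Finset (Pt d), X ⊆ Y → Y ⊆ Λf →
      Integrable fun ψ : ↥Y → ℝ => Real.exp (logWeight Λf m κ X (paste Y 0 ψ)) :=
    fun X Y hXY hY => by simpa only [exp_logWeight] using hint X Y 0 hXY hY
  refine ⟨fun X Y hXY hY => ?_, fun X₁ Y₁ X₂ Y₂ h₁ h₂ _ _ hY φ => reg_mul_reg Λf m κ h₁ h₂ hY φ,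
    fun X X' Y hXX' hX'Y hY φ => reg_le_reg_of_subset Λf m hκ.le hXX' (hZ X Y (hXX'.trans hX'Y) hY)
      (hZ X' Y hX'Y hY) (hZ ∅ Y (empty_subset Y) hY) φ⟩
  rw [reg_eq_div]
  exact div_self (div_pos (integral_exp_pos (hZ X Y hXY hY))
    (integral_exp_pos (hZ ∅ Y (empty_subset Y) hY))).ne'
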